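/- arXiv:1606.04366 — 3 statements merged into one kernel-verified Lean document; each statement's English description precedes it below -/
import Mathlib

section
/- Fix α ≥ 0, β > 0, g ∈ ℝ, w ≥ 0 with w² < β and αβ ≥ g². The function J(r) = √(α + β r² − 2|g| r) + w r on r ≥ 0 is minimized by r = 0 if and only if α w² ≥ g². -/
/-!
Write `α = s²` with `s ≥ 0` and `G = |g|`, so `J 0 = s`. For `r ≥ 0`, `J r ≥ s` holds either
trivially (when `w r ≥ s`) or after squaring, and squaring turns it into
`0 ≤ r ((β - w²) r - 2 (G - s w))`. If `G ≤ s w` this holds for every `r ≥ 0` because `w² ≤ β`;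
if `G > s w` it fails for all small `r > 0`, which are admissible since `g² ≤ α β` forces `s > 0`.
-/

open Set Filter Topology

theorem le_sqrt_add_iff {a b q : ℝ} : a ≤ √q + b ↔ a ≤ b ∨ (a - b) ^ 2 ≤ q := by
  rcases le_or_gt a b with hab | hab
  · simp only [hab, true_or, iff_true]
    linarith [Real.sqrt_nonneg q]
  · rw [← sub_le_iff_le_add, Real.le_sqrt' (sub_pos.2 hab)]
    simp [hab.not_ge]

theorem exists_pos_mul_lt_and_mul_lt {a c : ℝ} (ha : 0 < a) (hc : 0 < c) (b d : ℝ) :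
    ∃ r > 0, b * r < a ∧ d * r < c := by
  have hsmall : ∀ᶠ r in 𝓝 (0 : ℝ), b * r < a ∧ d * r < c := by
    refine ((continuous_const.mul continuous_id).continuousAt.eventually_lt continuousAt_const ?_).and
      ((continuous_const.mul continuous_id).continuousAt.eventually_lt continuousAt_const ?_) <;>
      simpa
  exact ((eventually_mem_nhdsWithin (s := Ioi 0)).and (nhdsWithin_le_nhds hsmall)).exists

section

variable {s β G w : ℝ}

theorem le_sqrt_quadratic_add_linear_iff (r : ℝ) :
    s ≤ √(s ^ 2 + β * r ^ 2 - 2 * G * r) + w * r ↔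
      s ≤ w * r ∨ 0 ≤ r * ((β - w ^ 2) * r - 2 * (G - s * w)) := by
  have hgap : s ^ 2 + β * r ^ 2 - 2 * G * r - (s - w * r) ^ 2
      = r * ((β - w ^ 2) * r - 2 * (G - s * w)) := by ring
  rw [le_sqrt_add_iff, ← sub_nonneg (b := (s - w * r) ^ 2), hgap]

theorem isMinOn_sqrt_quadratic_add_linear_iff (hs : 0 ≤ s) (hwβ : w ^ 2 ≤ β)
    (hG : G ^ 2 ≤ s ^ 2 * β) :
    IsMinOn (fun r => √(s ^ 2 + β * r ^ 2 - 2 * G * r) + w * r) (Ici 0) 0 ↔ G ≤ s * w := by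
  have hJ0 : √(s ^ 2 + β * 0 ^ 2 - 2 * G * 0) + w * 0 = s := by simp [Real.sqrt_sq hs]
  simp only [isMinOn_iff, mem_Ici, hJ0, le_sqrt_quadratic_add_linear_iff]
  constructor
  · intro hmin
    by_contra! hlt
    have hs0 : 0 < s := hs.lt_of_ne fun h => by subst h; nlinarith
    obtain ⟨r, hr, hwr, hdr⟩ :=
      exists_pos_mul_lt_and_mul_lt hs0 (sub_pos.2 hlt) w ((β - w ^ 2) / 2)
    rcases hmin r hr.le with h | h
    · linarith
    · linarith [(mul_nonneg_iff_of_pos_left hr).1 h]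
  · intro hle r hr
    exact Or.inr (mul_nonneg hr (by nlinarith))

end

theorem zero_minimizer_iff_threshold_general
    (α β g w : ℝ) (hα : 0 ≤ α) (hw : 0 ≤ w)
    (hwβ : w ^ 2 < β) (hdisc : g ^ 2 ≤ α * β) :
    IsMinOn (fun r => Real.sqrt (α + β * r ^ 2 - 2 * |g| * r) + w * r)
        (Set.Ici (0 : ℝ)) 0
      ↔ g ^ 2 ≤ α * w ^ 2 := by
  obtain ⟨s, hs, rfl⟩ : ∃ s, 0 ≤ s ∧ α = s ^ 2 := ⟨√α, Real.sqrt_nonneg α, (Real.sq_sqrt hα).symm⟩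
  rw [isMinOn_sqrt_quadratic_add_linear_iff hs hwβ.le (by rwa [sq_abs]), ← sq_abs g, ← mul_pow,
    sq_le_sq₀ (abs_nonneg g) (mul_nonneg hs hw)]

/-- Zero is a minimizer of J(r) = √(α + βr² − 2|g|r) + wr on r ≥ 0
iff the soft-thresholding condition α w² ≥ g² holds. -/
theorem zero_minimizer_iff_threshold
    (α β g w : ℝ) (hα : 0 ≤ α) (hβ : 0 < β) (hw : 0 ≤ w)
    (hwβ : w ^ 2 < β) (hdisc : g ^ 2 ≤ α * β) :
    IsMinOn (fun r => Real.sqrt (α + β * r ^ 2 - 2 * |g| * r) + w * r)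
        (Set.Ici (0 : ℝ)) 0
      ↔ g ^ 2 ≤ α * w ^ 2 :=
  zero_minimizer_iff_threshold_general α β g w hα hw hwβ hdisc
end

section
/- Fix α ≥ 0, β > 0, g ∈ ℝ, w ≥ 0 with w² < β, αβ ≥ g², and α w² < g². Then the unique minimizer over r ≥ 0 of J(r) = √(α + β r² − 2|g| r) + w r is r̂ = |g|/β − (w/(β√(β − w²)))·√(αβ − g²), and r̂ > 0. -/
/-!
Put `c = √(αβ - g²) / √(β - w²)`, so that `β r̂ = |g| - w c` and
`(β - w²) c² = αβ - g²`. Completing squares around `r̂` gives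
`α + β r² - 2|g| r = (c - w (r - r̂))² + (β - w²) (r - r̂)²`,
hence `J r ≥ |c - w (r - r̂)| + w r ≥ c + w r̂ = J r̂`, strictly when `r ≠ r̂` because
`β > w²`.
The condition `α w² < g²` is exactly `w c < |g|`, i.e. `r̂ > 0`.
-/

open Real

theorem isMinOn_of_forall_ne_lt {α β : Type*} [Preorder β] {f : α → β} {s : Set α} {a : α}
    (h : ∀ x ∈ s, x ≠ a → f a < f x) : IsMinOn f s a :=
  isMinOn_iff.mpr fun x hx => by
    rcases eq_or_ne x a with rfl | hne
    · exact le_rfl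
    · exact (h x hx hne).le

theorem IsMinOn.eq_of_forall_ne_lt {α β : Type*} [Preorder β] {f : α → β} {s : Set α}
    {a b : α} (hb : IsMinOn f s b) (hbs : b ∈ s) (ha : a ∈ s)
    (h : ∀ x ∈ s, x ≠ a → f a < f x) : b = a := by
  by_contra hne
  exact (h b hbs hne).not_ge (isMinOn_iff.mp hb a ha)

theorem lt_sqrt_sq_add_mul_sq_add_mul {c w κ x : ℝ} (hκ : 0 < κ) (hx : x ≠ 0) :
    c < √((c - w * x) ^ 2 + κ * x ^ 2) + w * x := by
  have hlt : |c - w * x| < √((c - w * x) ^ 2 + κ * x ^ 2) := by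
    rw [← sqrt_sq_eq_abs]
    exact sqrt_lt_sqrt (sq_nonneg _) (lt_add_of_pos_right _ (by positivity))
  linarith [le_abs_self (c - w * x)]

theorem quadratic_eq_sq_add_sq_of_mul_eq {α β a w c r₀ : ℝ} (hβ : β ≠ 0)
    (hr₀ : β * r₀ = a - w * c) (hc : (β - w ^ 2) * c ^ 2 = α * β - a ^ 2) (r : ℝ) :
    α + β * r ^ 2 - 2 * a * r = (c - w * (r - r₀)) ^ 2 + (β - w ^ 2) * (r - r₀) ^ 2 := by
  apply mul_left_cancel₀ hβ
  linear_combination (2 * β * r - β * r₀ - (w * c + a)) * hr₀ - hc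

theorem closed_form_minimizer_general
    (α β g w : ℝ) (hβ : 0 < β)
    (hwβ : w ^ 2 < β) (hdisc : g ^ 2 ≤ α * β) (hthr : α * w ^ 2 < g ^ 2)
    (rhat : ℝ)
    (hr : rhat = |g| / β - (w / (β * Real.sqrt (β - w ^ 2))) * Real.sqrt (α * β - g ^ 2)) :
    0 < rhat ∧
      IsMinOn (fun r => Real.sqrt (α + β * r ^ 2 - 2 * |g| * r) + w * r)
        (Set.Ici (0 : ℝ)) rhat ∧
      ∀ r ∈ Set.Ici (0 : ℝ),
        IsMinOn (fun r => Real.sqrt (α + β * r ^ 2 - 2 * |g| * r) + w * r)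
          (Set.Ici (0 : ℝ)) r → r = rhat := by
  have hκ : 0 < β - w ^ 2 := sub_pos.mpr hwβ
  set c := √(α * β - g ^ 2) / √(β - w ^ 2) with hc_def
  have hc : (β - w ^ 2) * c ^ 2 = α * β - g ^ 2 := by
    rw [div_pow, sq_sqrt hκ.le, sq_sqrt (sub_nonneg.mpr hdisc), mul_div_cancel₀ _ hκ.ne']
  have hβr : β * rhat = |g| - w * c := by
    rw [hr, hc_def]
    field_simp
  have hwc : w * c < |g| := by
    refine abs_lt_of_sq_lt_sq' ?_ (abs_nonneg g) |>.2
    nlinarith [sq_abs g]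
  have hpos : 0 < rhat := pos_of_mul_pos_right (hβr ▸ sub_pos.mpr hwc) hβ.le
  have hJ := quadratic_eq_sq_add_sq_of_mul_eq hβ.ne' hβr (sq_abs g ▸ hc)
  have hlt : ∀ r ∈ Set.Ici (0 : ℝ), r ≠ rhat →
      √(α + β * rhat ^ 2 - 2 * |g| * rhat) + w * rhat <
        √(α + β * r ^ 2 - 2 * |g| * r) + w * r := by
    intro r _ hne
    have := lt_sqrt_sq_add_mul_sq_add_mul (c := c) (w := w) hκ (sub_ne_zero.mpr hne)
    rw [hJ, hJ, sub_self, mul_zero, sub_zero, zero_pow two_ne_zero, mul_zero, add_zero,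
      sqrt_sq (by positivity)]
    linarith
  exact ⟨hpos, isMinOn_of_forall_ne_lt hlt,
    fun r hr0 hmin => hmin.eq_of_forall_ne_lt hr0 (Set.mem_Ici.mpr hpos.le) hlt⟩

/-- Closed-form unique positive minimizer of J(r) = √(α + βr² − 2|g|r) + wr
on r ≥ 0 when the soft-thresholding condition fails. -/
theorem closed_form_minimizer
    (α β g w : ℝ) (hα : 0 ≤ α) (hβ : 0 < β) (hw : 0 ≤ w)
    (hwβ : w ^ 2 < β) (hdisc : g ^ 2 ≤ α * β) (hthr : α * w ^ 2 < g ^ 2)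
    (rhat : ℝ)
    (hr : rhat = |g| / β - (w / (β * Real.sqrt (β - w ^ 2))) * Real.sqrt (α * β - g ^ 2)) :
    0 < rhat ∧
      IsMinOn (fun r => Real.sqrt (α + β * r ^ 2 - 2 * |g| * r) + w * r)
        (Set.Ici (0 : ℝ)) rhat ∧
      ∀ r ∈ Set.Ici (0 : ℝ),
        IsMinOn (fun r => Real.sqrt (α + β * r ^ 2 - 2 * |g| * r) + w * r)
          (Set.Ici (0 : ℝ)) r → r = rhat :=
  closed_form_minimizer_general α β g w hβ hwβ hdisc hthr rhat hr
end

section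
/- Define c_i^{(k)} = (σ_i^{(0)})^{1/2^k} for σ_i^{(0)} > 0. Suppose two sequences of covariance parameters satisfy D_i^{(k)} = c_i^{(k)} D̄_i^{(k)} and σ_i^{(k)} = c_i^{(k)} σ̄_i^{(k)}, and the update rules d_{i,j}^{(k+1)} = |z_{i,j}|/√(γⱼᵀ Σ̃ᵢ⁻¹ γⱼ) and σ_i^{(k+1)} = aᵢ/√(tr(Σ̃ᵢ⁻¹)) with Σ̃ᵢ = Γ D_i^{(k)} Γᵀ + σ_i^{(k)} I (and analogously with bars, sharing the same z_{i,j} and aᵢ). Then D_i^{(k+1)} = c_i^{(k+1)} D̄_i^{(k+1)} and σ_i^{(k+1)} = c_i^{(k+1)} σ̄_i^{(k+1)}; consequently c_i^{(k)} → 1 and the two covariance sequences converge to the same limit point. -/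
open Matrix Filter Topology

/-
Scaling Γᵀ D Γ + σ I by c scales its inverse by c⁻¹, hence every quadratic form and the trace
of the inverse by c⁻¹, and the updates (which divide by square roots of these) by √c.
Since √(σ⁰^(1/2ᵏ)) = σ⁰^(1/2ᵏ⁺¹), the factor c^(k) becomes c^(k+1), and 1/2ᵏ → 0 gives c^(k) → 1.
-/

-- Unlike `Matrix.inv_smul'`, no invertibility of `A` is needed: otherwise both sides are `0`.
theorem Matrix.inv_smul₀ {n K : Type*} [Fintype n] [DecidableEq n] [Field K]
    (A : Matrix n n K) {c : K} (hc : c ≠ 0) : (c • A)⁻¹ = c⁻¹ • A⁻¹ := by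
  by_cases hA : IsUnit A.det
  · exact inv_smul' A (Units.mk0 c hc) hA
  · have hcA : ¬IsUnit (c • A).det := by
      rw [det_smul, IsUnit.mul_iff, not_and_or]
      exact Or.inr hA
    rw [nonsing_inv_apply_not_isUnit _ hA, nonsing_inv_apply_not_isUnit _ hcA, smul_zero]

lemma Real.div_sqrt_inv_mul {u : ℝ} (hu : 0 ≤ u) (x y : ℝ) :
    y / √(u⁻¹ * x) = √u * (y / √x) := by
  rw [Real.sqrt_mul (inv_nonneg.mpr hu), Real.sqrt_inv, div_mul_eq_div_div, div_inv_eq_mul,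
    mul_div_right_comm, mul_comm]

lemma Real.rpow_one_div_two_pow_succ {x : ℝ} (hx : 0 ≤ x) (k : ℕ) :
    x ^ ((1 : ℝ) / 2 ^ (k + 1)) = √(x ^ ((1 : ℝ) / 2 ^ k)) := by
  rw [Real.sqrt_eq_rpow, ← Real.rpow_mul hx, pow_succ, one_div_mul_one_div]

lemma Real.tendsto_rpow_one_div_two_pow {x : ℝ} (hx : x ≠ 0) :
    Tendsto (fun k : ℕ => x ^ ((1 : ℝ) / 2 ^ k)) atTop (𝓝 1) := by
  have hexp : Tendsto (fun k : ℕ => (1 : ℝ) / 2 ^ k) atTop (𝓝 0) := by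
    simpa only [one_div, inv_pow] using
      tendsto_pow_atTop_nhds_zero_of_lt_one (by norm_num : (0 : ℝ) ≤ 2⁻¹) (by norm_num)
  simpa only [Real.rpow_zero, Function.comp_def] using
    (Real.continuousAt_const_rpow hx).tendsto.comp hexp

lemma transpose_mul_diagonal_mul_add_smul_one_eq_smul {m n R : Type*} [Fintype m] [DecidableEq m]
    [Fintype n] [DecidableEq n] [CommRing R] (Γ : Matrix m n R) (d : m → R) (s c : R) :
    Γᵀ * diagonal (fun j => c * d j) * Γ + (c * s) • (1 : Matrix n n R) =
      c • (Γᵀ * diagonal d * Γ + s • (1 : Matrix n n R)) := by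
  rw [show diagonal (fun j => c * d j) = c • diagonal d from diagonal_smul c d,
    smul_add, Matrix.mul_smul, Matrix.smul_mul, mul_smul]

theorem covariance_invariance_induction_step_general
    (N q : ℕ) (Γ : Matrix (Fin q) (Fin N) ℝ)
    (σ0 : ℝ) (hσ0 : 0 < σ0)
    (c : ℕ → ℝ) (hcdef : ∀ k, c k = σ0 ^ ((1 : ℝ) / 2 ^ k))
    (k : ℕ)
    (D Dbar : Fin q → ℝ)
    (σ σbar : ℝ)
    (hD : D = fun j => c k * Dbar j) (hσ : σ = c k * σbar)
    (z : Fin q → ℝ) (a : ℝ)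
    (Sig Sigbar : Matrix (Fin N) (Fin N) ℝ)
    (hSig : Sig = Γᵀ * Matrix.diagonal D * Γ + σ • (1 : Matrix (Fin N) (Fin N) ℝ))
    (hSigbar : Sigbar = Γᵀ * Matrix.diagonal Dbar * Γ + σbar • (1 : Matrix (Fin N) (Fin N) ℝ))
    (D' Dbar' : Fin q → ℝ) (σ' σbar' : ℝ)
    (hD' : D' = fun j => |z j| / Real.sqrt ((fun n => Γ j n) ⬝ᵥ (Sig⁻¹ *ᵥ fun n => Γ j n)))
    (hDbar' : Dbar' = fun j =>
      |z j| / Real.sqrt ((fun n => Γ j n) ⬝ᵥ (Sigbar⁻¹ *ᵥ fun n => Γ j n)))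
    (hσ' : σ' = a / Real.sqrt Sig⁻¹.trace)
    (hσbar' : σbar' = a / Real.sqrt Sigbar⁻¹.trace) :
    (D' = fun j => c (k + 1) * Dbar' j) ∧ σ' = c (k + 1) * σbar' ∧
      Tendsto c atTop (nhds 1) := by
  have hc_nonneg : 0 ≤ c k := hcdef k ▸ Real.rpow_nonneg hσ0.le _
  have hc_succ : c (k + 1) = √(c k) := by
    rw [hcdef, hcdef, Real.rpow_one_div_two_pow_succ hσ0.le]
  have hSig_inv : Sig⁻¹ = (c k)⁻¹ • Sigbar⁻¹ := by
    rw [hSig, hSigbar, hD, hσ, transpose_mul_diagonal_mul_add_smul_one_eq_smul,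
      inv_smul₀ _ (hcdef k ▸ Real.rpow_pos_of_pos hσ0 _).ne']
  refine ⟨?_, ?_, ?_⟩
  · subst hD' hDbar'
    funext j
    dsimp only
    rw [hSig_inv, smul_mulVec, dotProduct_smul, smul_eq_mul, hc_succ,
      Real.div_sqrt_inv_mul hc_nonneg]
  · rw [hσ', hσbar', hSig_inv, trace_smul, smul_eq_mul, hc_succ, Real.div_sqrt_inv_mul hc_nonneg]
  · simpa only [← hcdef] using Real.tendsto_rpow_one_div_two_pow hσ0.ne'

/-- Induction step of the initialization-invariance theorem: if two covariance
parameter sequences differ by the factor c^(k) = (σ⁰)^(1/2ᵏ), then after one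
update they differ by c^(k+1); consequently c^(k) → 1. -/
theorem covariance_invariance_induction_step
    (N q : ℕ) (Γ : Matrix (Fin q) (Fin N) ℝ)
    (σ0 : ℝ) (hσ0 : 0 < σ0)
    (c : ℕ → ℝ) (hcdef : ∀ k, c k = σ0 ^ ((1 : ℝ) / 2 ^ k))
    (k : ℕ)
    (D Dbar : Fin q → ℝ) (hDbar : ∀ j, 0 ≤ Dbar j)
    (σ σbar : ℝ) (hσbar : 0 < σbar)
    (hD : D = fun j => c k * Dbar j) (hσ : σ = c k * σbar)
    (z : Fin q → ℝ) (a : ℝ) (ha : 0 ≤ a)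
    (Sig Sigbar : Matrix (Fin N) (Fin N) ℝ)
    (hSig : Sig = Γᵀ * Matrix.diagonal D * Γ + σ • (1 : Matrix (Fin N) (Fin N) ℝ))
    (hSigbar : Sigbar = Γᵀ * Matrix.diagonal Dbar * Γ + σbar • (1 : Matrix (Fin N) (Fin N) ℝ))
    (D' Dbar' : Fin q → ℝ) (σ' σbar' : ℝ)
    (hD' : D' = fun j => |z j| / Real.sqrt ((fun n => Γ j n) ⬝ᵥ (Sig⁻¹ *ᵥ fun n => Γ j n)))
    (hDbar' : Dbar' = fun j =>
      |z j| / Real.sqrt ((fun n => Γ j n) ⬝ᵥ (Sigbar⁻¹ *ᵥ fun n => Γ j n)))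
    (hσ' : σ' = a / Real.sqrt Sig⁻¹.trace)
    (hσbar' : σbar' = a / Real.sqrt Sigbar⁻¹.trace) :
    (D' = fun j => c (k + 1) * Dbar' j) ∧ σ' = c (k + 1) * σbar' ∧
      Tendsto c atTop (nhds 1) :=
  covariance_invariance_induction_step_general N q Γ σ0 hσ0 c hcdef k D Dbar σ σbar hD hσ z a Sig
    Sigbar hSig hSigbar D' Dbar' σ' σbar' hD' hDbar' hσ' hσbar'
end
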